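/- Let q be a self-join-free Boolean conjunctive query, G an atom and y a variable of q with G attacks y, and x a variable with FD(q \ {G}) ⊨ x → y. Then G attacks x. -/

import Mathlib

/-- A fact `R(a₁,…,aₙ)`: relation name, primary-key values, non-key values. -/
structure DBFact where
  rel : ℕ
  key : List ℕ
  rest : List ℕ
deriving DecidableEq

/-- Two facts are key-equal if they have the same relation name and primary-key value. -/
def keyEq (A B : DBFact) : Prop := A.rel = B.rel ∧ A.key = B.key

instance (A B : DBFact) : Decidable (keyEq A B) :=
  inferInstanceAs (Decidable (_ ∧ _))

/-- A set of facts is consistent if it contains no two distinct key-equal facts. -/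
def Consistent (s : Finset DBFact) : Prop := ∀ A ∈ s, ∀ B ∈ s, keyEq A B → A = B

/-- A repair of `db` is a maximal (w.r.t. ⊆) consistent subset of `db`. -/
def Repair (db r : Finset DBFact) : Prop :=
  r ⊆ db ∧ Consistent r ∧ ∀ r', r' ⊆ db → Consistent r' → r ⊆ r' → r = r'

/-- A term is a variable (inl) or a constant (inr). -/
abbrev Term := ℕ ⊕ ℕ

/-- An atom `R(t₁,…,tₙ)` with key positions and non-key positions. -/
structure Atom where
  rel : ℕ
  key : List Term
  rest : List Term
deriving DecidableEq

def termVars (l : List Term) : Finset ℕ := (l.filterMap fun t => t.getLeft?).toFinset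

/-- Variables at primary-key positions of an atom. -/
def keyVars (F : Atom) : Finset ℕ := termVars F.key

/-- All variables of an atom. -/
def atomVars (F : Atom) : Finset ℕ := termVars F.key ∪ termVars F.rest

/-- A query (finite set of atoms) is self-join-free: no relation name occurs twice. -/
def SJF (q : Finset Atom) : Prop := ∀ F ∈ q, ∀ G ∈ q, F.rel = G.rel → F = G

/-- Apply a valuation (total map from variables to constants) to an atom, yielding a fact. -/
def applyVal (θ : ℕ → ℕ) (F : Atom) : DBFact :=
  ⟨F.rel, F.key.map (Sum.elim θ id), F.rest.map (Sum.elim θ id)⟩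

/-- Semantic implication of a functional dependency `X → Y` by a set of FDs
(two-tuple semantics, which is equivalent to the standard one for FDs). -/
def FDImplies (fds : Set (Set ℕ × Set ℕ)) (X Y : Set ℕ) : Prop :=
  ∀ θ μ : ℕ → ℕ,
    (∀ p ∈ fds, (∀ v ∈ p.1, θ v = μ v) → ∀ v ∈ p.2, θ v = μ v) →
    (∀ v ∈ X, θ v = μ v) → ∀ v ∈ Y, θ v = μ v

/-- `FD(q) = { key(F) → vars(F) : F ∈ q }`. -/
def FDs (q : Finset Atom) : Set (Set ℕ × Set ℕ) :=
  {p | ∃ F ∈ q, p = ((keyVars F : Set ℕ), (atomVars F : Set ℕ))}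

/-- `F⁺ = { x : FD(q \ {F}) ⊨ key(F) → x }`. -/
def plus (q : Finset Atom) (F : Atom) : Set ℕ :=
  {x | FDImplies (FDs (q.erase F)) (keyVars F : Set ℕ) {x}}

/-- One step of a witness for an attack by `F`: consecutive atoms share a variable outside `F⁺`. -/
def AttackStep (q : Finset Atom) (F : Atom) (A B : Atom) : Prop :=
  ¬ ((atomVars A ∩ atomVars B : Finset ℕ) : Set ℕ) ⊆ plus q F

/-- `F` attacks `G` in the attack graph of `q`. -/
def Attacks (q : Finset Atom) (F G : Atom) : Prop :=
  F ≠ G ∧ F ∈ q ∧ ∃ L : List Atom, (∀ A ∈ L, A ∈ q) ∧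
    List.Chain (AttackStep q F) F L ∧ (F :: L).getLast (List.cons_ne_nil F L) = G

/-- `F` attacks the variable `z`. -/
def AttacksVar (q : Finset Atom) (F : Atom) (z : ℕ) : Prop :=
  z ∉ plus q F ∧ F ∈ q ∧ ∃ L : List Atom, (∀ A ∈ L, A ∈ q) ∧
    List.Chain (AttackStep q F) F L ∧ z ∈ atomVars ((F :: L).getLast (List.cons_ne_nil F L))

/-- `r ⊨ ζ(q)` for a valuation `ζ` over the variable set `X`. -/
def Sat (r : Finset DBFact) (q : Finset Atom) (X : Finset ℕ) (ζ : ℕ → ℕ) : Prop :=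
  ∃ θ : ℕ → ℕ, (∀ v ∈ X, θ v = ζ v) ∧ ∀ F ∈ q, applyVal θ F ∈ r

/-- `r ⊨ q`. -/
def Sat0 (r : Finset DBFact) (q : Finset Atom) : Prop :=
  ∃ θ : ℕ → ℕ, ∀ F ∈ q, applyVal θ F ∈ r

/-- A fact `A` is relevant for `q` in `r` if `A ∈ θ(q) ⊆ r` for some valuation `θ`. -/
def Relevant (A : DBFact) (q : Finset Atom) (r : Finset DBFact) : Prop :=
  ∃ θ : ℕ → ℕ, (∃ F ∈ q, applyVal θ F = A) ∧ ∀ F ∈ q, applyVal θ F ∈ r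

/-!
Since `y ∉ G⁺`, there are two valuations respecting `FD(q \ {G})` that agree on `key(G)` but
differ on `y`. Let the second one copy the first on `x` and on every variable of an atom of
`q \ {G}` from which an atom containing `x` is reachable by attack steps. Atoms outside this
region share with it only variables of `G⁺`, where the two valuations already agree, so the new
pair still respects `FD(q \ {G})`; it agrees on `x`, hence on `y`, so `y` lies in the region.
The resulting path from an atom containing `y` to one containing `x` extends the attack of `G`
on `y` to an attack on `x`.
-/

open Set Relation

theorem fdImplies_iff {fds : Set (Set ℕ × Set ℕ)} {X Y : Set ℕ} :
    FDImplies fds X Y ↔ ∀ θ μ : ℕ → ℕ,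
      (∀ p ∈ fds, EqOn θ μ p.1 → EqOn θ μ p.2) → EqOn θ μ X → EqOn θ μ Y :=
  Iff.rfl

theorem FDImplies.trans {fds : Set (Set ℕ × Set ℕ)} {X Y Z : Set ℕ}
    (hXY : FDImplies fds X Y) (hYZ : FDImplies fds Y Z) : FDImplies fds X Z :=
  fun θ μ hfds hX => hYZ θ μ hfds (hXY θ μ hfds hX)

theorem respects_piecewise {fds : Set (Set ℕ × Set ℕ)} {θ μ : ℕ → ℕ}
    (hfds : ∀ p ∈ fds, EqOn θ μ p.1 → EqOn θ μ p.2) (S : Set ℕ) [DecidablePred (· ∈ S)]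
    (hS : ∀ p ∈ fds, p.2 ⊆ S ∨ p.1 ⊆ p.2 ∧ EqOn θ μ (p.2 ∩ S)) :
    ∀ p ∈ fds, EqOn θ (S.piecewise θ μ) p.1 → EqOn θ (S.piecewise θ μ) p.2 := by
  intro p hp hp₁
  rcases hS p hp with hsub | ⟨h₁₂, hagree⟩
  · exact (piecewise_eqOn S θ μ).symm.mono hsub
  · have hμ : EqOn (S.piecewise θ μ) μ p.2 := by
      intro v hv
      by_cases hvS : v ∈ S
      · rw [piecewise_eq_of_mem _ _ _ hvS]
        exact hagree ⟨hv, hvS⟩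
      · exact piecewise_eq_of_notMem _ _ _ hvS
    exact (hfds p hp (hp₁.trans (hμ.mono h₁₂))).trans hμ.symm

theorem isChain_cons_iff_isChain_and_forall_mem {α : Type*} {R : α → α → Prop} {P : α → Prop}
    {a : α} {l : List α} :
    List.IsChain (fun x y => P y ∧ R x y) (a :: l) ↔ List.IsChain R (a :: l) ∧ ∀ b ∈ l, P b := by
  induction l generalizing a with
  | nil => simp
  | cons b l ih =>
    simp only [List.isChain_cons_cons, ih, List.mem_cons, forall_eq_or_imp]
    tauto

theorem keyVars_subset_atomVars (F : Atom) : keyVars F ⊆ atomVars F :=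
  Finset.subset_union_left

def AttackEdge (q : Finset Atom) (G A B : Atom) : Prop :=
  B ∈ q ∧ AttackStep q G A B

theorem reflTransGen_attackEdge_iff {q : Finset Atom} {G A : Atom} :
    ReflTransGen (AttackEdge q G) G A ↔ ∃ L : List Atom, (∀ B ∈ L, B ∈ q) ∧
      List.IsChain (AttackStep q G) (G :: L) ∧ (G :: L).getLast (List.cons_ne_nil G L) = A := by
  constructor
  · intro h
    obtain ⟨L, hchain, hlast⟩ := List.exists_isChain_cons_of_relationReflTransGen h
    obtain ⟨hchain, hmem⟩ := isChain_cons_iff_isChain_and_forall_mem.mp hchain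
    exact ⟨L, hmem, hchain, hlast⟩
  · rintro ⟨L, hmem, hchain, hlast⟩
    exact List.relationReflTransGen_of_exists_isChain_cons L
      (isChain_cons_iff_isChain_and_forall_mem.mpr ⟨hchain, hmem⟩) hlast

theorem attacksVar_iff {q : Finset Atom} {G : Atom} {z : ℕ} :
    AttacksVar q G z ↔ z ∉ plus q G ∧ G ∈ q ∧
      ∃ A, ReflTransGen (AttackEdge q G) G A ∧ z ∈ atomVars A := by
  simp only [AttacksVar, reflTransGen_attackEdge_iff]
  constructor
  · rintro ⟨hz, hG, L, hmem, hchain, hlast⟩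
    exact ⟨hz, hG, _, ⟨L, hmem, hchain, rfl⟩, hlast⟩
  · rintro ⟨hz, hG, A, ⟨L, hmem, hchain, rfl⟩, hA⟩
    exact ⟨hz, hG, L, hmem, hchain, hA⟩

theorem exists_reflTransGen_attackEdge_of_fdImplies {q : Finset Atom} {G : Atom} {x y : ℕ}
    (hy : y ∉ plus q G) (hxy : x ≠ y) (himp : FDImplies (FDs (q.erase G)) {x} {y}) :
    ∃ B ∈ q.erase G, y ∈ atomVars B ∧
      ∃ A, x ∈ atomVars A ∧ ReflTransGen (AttackEdge q G) B A := by
  classical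
  by_contra hno
  obtain ⟨θ, μ, hfds, hkey, hne⟩ : ∃ θ μ : ℕ → ℕ,
      (∀ p ∈ FDs (q.erase G), EqOn θ μ p.1 → EqOn θ μ p.2) ∧
        EqOn θ μ (keyVars G) ∧ θ y ≠ μ y := by
    simpa [plus, fdImplies_iff] using hy
  have hplus : EqOn θ μ (plus q G) := fun w hw => hw θ μ hfds hkey w rfl
  let Reaches (H : Atom) : Prop :=
    ∃ A ∈ q.erase G, x ∈ atomVars A ∧ ReflTransGen (AttackEdge q G) H A
  let S : Set ℕ := {x} ∪ {w | ∃ B ∈ q.erase G, Reaches B ∧ w ∈ atomVars B}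
  have hclosed : ∀ H ∈ q.erase G, ¬ Reaches H → EqOn θ μ (atomVars H ∩ S) := by
    rintro H hH hHS w ⟨hwH, rfl | ⟨B, hB, ⟨A, hA, hxA, hBA⟩, hwB⟩⟩
    · exact absurd ⟨H, hH, hwH, .refl⟩ hHS
    · by_contra hw
      have hHB : AttackEdge q G H B :=
        ⟨Finset.mem_of_mem_erase hB, fun hsub => hw (hplus (hsub (by simp [hwH, hwB])))⟩
      exact hHS ⟨A, hA, hxA, .head hHB hBA⟩
  have hfds' := respects_piecewise hfds S <| by
    rintro p ⟨H, hH, rfl⟩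
    by_cases hH' : Reaches H
    · exact .inl fun w hw => .inr ⟨H, hH, hH', hw⟩
    · exact .inr ⟨Finset.coe_subset.mpr (keyVars_subset_atomVars H), hclosed H hH hH'⟩
  have hy' := himp θ (S.piecewise θ μ) hfds'
    (eqOn_singleton.mpr (piecewise_eq_of_mem _ _ _ (by simp [S])).symm) y rfl
  have hyS : y ∉ S := by
    rintro (rfl | ⟨B, hB, ⟨A, -, hxA, hBA⟩, hyB⟩)
    · exact hxy rfl
    · exact hno ⟨B, hB, hyB, A, hxA, hBA⟩
  exact hne (hy'.trans (piecewise_eq_of_notMem _ _ _ hyS))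

theorem attack_backpropagation_general (q : Finset Atom) (G : Atom)
    (x y : ℕ) (hatt : AttacksVar q G y)
    (himp : FDImplies (FDs (q.erase G)) {x} {y}) :
    AttacksVar q G x := by
  obtain rfl | hxy := eq_or_ne x y
  · exact hatt
  obtain ⟨hyG, hGq, C, hGC, hyC⟩ := attacksVar_iff.mp hatt
  obtain ⟨B, hB, hyB, A, hxA, hBA⟩ := exists_reflTransGen_attackEdge_of_fdImplies hyG hxy himp
  have hCB : AttackEdge q G C B :=
    ⟨Finset.mem_of_mem_erase hB, fun hsub => hyG (hsub (by simp [hyC, hyB]))⟩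
  exact attacksVar_iff.mpr
    ⟨fun hxG => hyG (FDImplies.trans hxG himp), hGq, A, (hGC.tail hCB).trans hBA, hxA⟩

/-- If `G` attacks `y` and `FD(q \ {G}) ⊨ x → y`, then `G` attacks `x`. -/
theorem attack_backpropagation (q : Finset Atom) (hq : SJF q) (G : Atom) (hG : G ∈ q)
    (x y : ℕ) (hatt : AttacksVar q G y)
    (himp : FDImplies (FDs (q.erase G)) {x} {y}) :
    AttacksVar q G x :=
  attack_backpropagation_general q G x y hatt himp
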